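/- In HOπP, the processes e | !a[e] | !a[0] and !a[e] | !a[0] are reduction-closed barbed equivalent, where e abbreviates the input e(X).0 with X not free in the continuation, and a, e are distinct names. -/

import Mathlib

/-! Syntax of HOπP: processes and terms -/

mutual
inductive Proc : Type where
  | nil : Proc
  | inp : ℕ → ℕ → Proc → Proc          -- a(X).P
  | out : ℕ → Tm → Proc → Proc         -- ā⟨M⟩.P
  | par : Proc → Proc → Proc           -- P | Q
  | loc : ℕ → Proc → Proc              -- a[P]
  | nu : ℕ → Proc → Proc               -- νa.P
  | rep : Proc → Proc                  -- !P
  | run : Tm → Proc                    -- run(M)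
inductive Tm : Type where
  | var : ℕ → Tm                       -- X
  | quote : Proc → Tm                  -- `P
end

/-! Free names, free variables, substitution -/

mutual
def Proc.fn : Proc → Finset ℕ
  | .nil => ∅
  | .inp a _ P => insert a P.fn
  | .out a M P => insert a (M.fn ∪ P.fn)
  | .par P Q => P.fn ∪ Q.fn
  | .loc a P => insert a P.fn
  | .nu a P => P.fn.erase a
  | .rep P => P.fn
  | .run M => M.fn
def Tm.fn : Tm → Finset ℕ
  | .var _ => ∅
  | .quote P => P.fn
end

mutual
def Proc.fv : Proc → Finset ℕ
  | .nil => ∅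
  | .inp _ X P => P.fv.erase X
  | .out _ M P => M.fv ∪ P.fv
  | .par P Q => P.fv ∪ Q.fv
  | .loc _ P => P.fv
  | .nu _ P => P.fv
  | .rep P => P.fv
  | .run M => M.fv
def Tm.fv : Tm → Finset ℕ
  | .var X => {X}
  | .quote P => P.fv
end

mutual
def Proc.subst : Proc → ℕ → Tm → Proc
  | .nil, _, _ => .nil
  | .inp a Y P, X, M => if Y = X then .inp a Y P else .inp a Y (P.subst X M)
  | .out a N P, X, M => .out a (N.subst X M) (P.subst X M)
  | .par P Q, X, M => .par (P.subst X M) (Q.subst X M)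
  | .loc a P, X, M => .loc a (P.subst X M)
  | .nu a P, X, M => .nu a (P.subst X M)
  | .rep P, X, M => .rep (P.subst X M)
  | .run N, X, M => .run (N.subst X M)
def Tm.subst : Tm → ℕ → Tm → Tm
  | .var Y, X, M => if Y = X then M else .var Y
  | .quote P, X, M => .quote (P.subst X M)
end

/-! Labels and the labelled transition system -/

inductive Label : Type where
  | tau : Label
  | inp : ℕ → Tm → Label               -- a(M)
  | out : List ℕ → ℕ → Tm → Label      -- ν b̃. ā⟨M⟩

def Label.bnames : Label → Finset ℕ
  | .out bs _ _ => bs.toFinset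
  | _ => ∅

def Label.names : Label → Finset ℕ
  | .tau => ∅
  | .inp a M => insert a M.fn
  | .out bs a M => insert a (M.fn ∪ bs.toFinset)

def nuList (bs : List ℕ) (P : Proc) : Proc := bs.foldr Proc.nu P

inductive Step : Proc → Label → Proc → Prop where
  | hoIn {a X P M} : Step (.inp a X P) (.inp a M) (P.subst X M)
  | hoOut {a M P} : Step (.out a M P) (.out [] a M) P
  | parL {P₁ P₂ P₁' α} : Step P₁ α P₁' → (∀ b ∈ α.bnames, b ∉ P₂.fn) →
      Step (.par P₁ P₂) α (.par P₁' P₂)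
  | parR {P₁ P₂ P₂' α} : Step P₂ α P₂' → (∀ b ∈ α.bnames, b ∉ P₁.fn) →
      Step (.par P₁ P₂) α (.par P₁ P₂')
  | rep {P α P'} : Step (.par (.rep P) P) α P' → Step (.rep P) α P'
  | reactL {P₁ P₂ P₁' P₂' bs a M} : Step P₁ (.out bs a M) P₁' →
      Step P₂ (.inp a M) P₂' → (∀ b ∈ bs, b ∉ P₂.fn) →
      Step (.par P₁ P₂) .tau (nuList bs (.par P₁' P₂'))
  | reactR {P₁ P₂ P₁' P₂' bs a M} : Step P₂ (.out bs a M) P₂' →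
      Step P₁ (.inp a M) P₁' → (∀ b ∈ bs, b ∉ P₁.fn) →
      Step (.par P₁ P₂) .tau (nuList bs (.par P₁' P₂'))
  | guard {P P' α a} : Step P α P' → a ∉ α.names → Step (.nu a P) α (.nu a P')
  | extr {P P' bs a c M} : Step P (.out bs a M) P' → c ≠ a → c ∈ M.fn → c ∉ bs →
      Step (.nu c P) (.out (bs ++ [c]) a M) P'
  | transp {P P' α a} : Step P α P' → Step (.loc a P) α (.loc a P')
  | passiv {a P} : Step (.loc a P) (.out [] a (.quote P)) .nil
  | runStep {P} : Step (.run (.quote P)) .tau P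

/-- Weak internal transition ⟹ : reflexive-transitive closure of τ-steps. -/
def Weak : Proc → Proc → Prop := Relation.ReflTransGen (fun P Q => Step P .tau Q)

/-- Weak labelled transition ⟹α (with ⟹τ = ⟹). -/
def WeakStep (P : Proc) (α : Label) (Q : Proc) : Prop :=
  match α with
  | .tau => Weak P Q
  | _ => ∃ P₁ P₂, Weak P P₁ ∧ Step P₁ α P₂ ∧ Weak P₂ Q

/-! Barbs and reduction-closed barbed equivalence -/

def Barb (P : Proc) (a : ℕ) : Prop :=
  (∃ M P', Step P (.inp a M) P') ∨ (∃ bs M P', Step P (.out bs a M) P')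

def WeakBarb (P : Proc) (a : ℕ) : Prop := ∃ P', Weak P P' ∧ Barb P' a

def IsBarbedEquivCand (R : Proc → Proc → Prop) : Prop :=
  (∀ P Q, R P Q → R Q P) ∧
  (∀ P Q, R P Q → P.fv = ∅ ∧ Q.fv = ∅) ∧
  (∀ P Q, R P Q → ∀ P', Step P .tau P' → ∃ Q', Weak Q Q' ∧ R P' Q') ∧
  (∀ P Q, R P Q → ∀ a, Barb P a → WeakBarb Q a) ∧
  (∀ P Q, R P Q → ∀ S : Proc, S.fv = ∅ → R (.par P S) (.par Q S))

/-- Reduction-closed barbed equivalence ≈. -/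
def BarbedEquiv (P Q : Proc) : Prop := ∃ R, IsBarbedEquivCand R ∧ R P Q

/-! Single-hole process contexts (hole for a process) and barbed congruence -/

mutual
inductive PCtx : Type where
  | hole : PCtx
  | inp : ℕ → ℕ → PCtx → PCtx
  | outP : ℕ → Tm → PCtx → PCtx
  | outT : ℕ → TCtx → Proc → PCtx
  | parL : PCtx → Proc → PCtx
  | parR : Proc → PCtx → PCtx
  | loc : ℕ → PCtx → PCtx
  | nu : ℕ → PCtx → PCtx
  | rep : PCtx → PCtx
  | runT : TCtx → PCtx
inductive TCtx : Type where
  | quote : PCtx → TCtx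
end

mutual
def PCtx.fill : PCtx → Proc → Proc
  | .hole, P => P
  | .inp a X C, P => .inp a X (C.fill P)
  | .outP a M C, P => .out a M (C.fill P)
  | .outT a C Q, P => .out a (C.fill P) Q
  | .parL C Q, P => .par (C.fill P) Q
  | .parR Q C, P => .par Q (C.fill P)
  | .loc a C, P => .loc a (C.fill P)
  | .nu a C, P => .nu a (C.fill P)
  | .rep C, P => .rep (C.fill P)
  | .runT C, P => .run (C.fill P)
def TCtx.fill : TCtx → Proc → Tm
  | .quote C, P => .quote (C.fill P)
end

def IsBarbedCongrCand (R : Proc → Proc → Prop) : Prop :=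
  (∀ P Q, R P Q → R Q P) ∧
  (∀ P Q, R P Q → P.fv = ∅ ∧ Q.fv = ∅) ∧
  (∀ P Q, R P Q → ∀ P', Step P .tau P' → ∃ Q', Weak Q Q' ∧ R P' Q') ∧
  (∀ P Q, R P Q → ∀ a, Barb P a → WeakBarb Q a) ∧
  (∀ P Q, R P Q → ∀ C : PCtx, (C.fill P).fv = ∅ → (C.fill Q).fv = ∅ →
    R (C.fill P) (C.fill Q))

/-- Reduction-closed barbed congruence ≈c. -/
def BarbedCongr (P Q : Proc) : Prop := ∃ R, IsBarbedCongrCand R ∧ R P Q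

/-! Environments and context closures -/

abbrev Env := Set (Tm × Tm)

def envFn (E : Env) : Set ℕ := ⋃ p ∈ E, ((p.1.fn : Set ℕ) ∪ (p.2.fn : Set ℕ))
def envFnFst (E : Env) : Set ℕ := ⋃ p ∈ E, (p.1.fn : Set ℕ)
def envFnSnd (E : Env) : Set ℕ := ⋃ p ∈ E, (p.2.fn : Set ℕ)

/-- A well-formed environment: finitely many free names, variable-closed terms. -/
def GoodEnv (E : Env) : Prop :=
  (envFn E).Finite ∧ ∀ p ∈ E, p.1.fv = ∅ ∧ p.2.fv = ∅

/-! Multi-hole contexts (holes for terms) -/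

mutual
inductive CProc : Type where
  | nil : CProc
  | inp : ℕ → ℕ → CProc → CProc
  | out : ℕ → CTm → CProc → CProc
  | par : CProc → CProc → CProc
  | loc : ℕ → CProc → CProc
  | nu : ℕ → CProc → CProc
  | rep : CProc → CProc
  | run : CTm → CProc
inductive CTm : Type where
  | hole : ℕ → CTm
  | var : ℕ → CTm
  | quote : CProc → CTm
end

mutual
def CProc.fill : CProc → (ℕ → Tm) → Proc
  | .nil, _ => .nil
  | .inp a X C, σ => .inp a X (C.fill σ)
  | .out a M C, σ => .out a (M.fill σ) (C.fill σ)
  | .par C D, σ => .par (C.fill σ) (D.fill σ)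
  | .loc a C, σ => .loc a (C.fill σ)
  | .nu a C, σ => .nu a (C.fill σ)
  | .rep C, σ => .rep (C.fill σ)
  | .run M, σ => .run (M.fill σ)
def CTm.fill : CTm → (ℕ → Tm) → Tm
  | .hole i, σ => σ i
  | .var X, _ => .var X
  | .quote C, σ => .quote (C.fill σ)
end

mutual
def CProc.fn : CProc → Finset ℕ
  | .nil => ∅
  | .inp a _ C => insert a C.fn
  | .out a M C => insert a (M.fn ∪ C.fn)
  | .par C D => C.fn ∪ D.fn
  | .loc a C => insert a C.fn
  | .nu a C => C.fn.erase a
  | .rep C => C.fn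
  | .run M => M.fn
def CTm.fn : CTm → Finset ℕ
  | .hole _ => ∅
  | .var _ => ∅
  | .quote C => C.fn
end

mutual
def CProc.bn : CProc → Finset ℕ
  | .nil => ∅
  | .inp _ _ C => C.bn
  | .out _ M C => M.bn ∪ C.bn
  | .par C D => C.bn ∪ D.bn
  | .loc _ C => C.bn
  | .nu a C => insert a C.bn
  | .rep C => C.bn
  | .run M => M.bn
def CTm.bn : CTm → Finset ℕ
  | .hole _ => ∅
  | .var _ => ∅
  | .quote C => C.bn
end

mutual
def CProc.holes : CProc → Finset ℕ
  | .nil => ∅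
  | .inp _ _ C => C.holes
  | .out _ M C => M.holes ∪ C.holes
  | .par C D => C.holes ∪ D.holes
  | .loc _ C => C.holes
  | .nu _ C => C.holes
  | .rep C => C.holes
  | .run M => M.holes
def CTm.holes : CTm → Finset ℕ
  | .hole i => {i}
  | .var _ => ∅
  | .quote C => C.holes
end

/-- Process context closure E⋆r. -/
def procClosure (E : Env) (r : Set ℕ) : Set (Proc × Proc) :=
  { pq | ∃ (C : CProc) (σ τ : ℕ → Tm),
      (∀ i ∈ C.holes, (σ i, τ i) ∈ E) ∧
      (∀ b ∈ C.bn, (b : ℕ) ∉ envFn E ∪ r) ∧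
      ((C.fn : Set ℕ) ⊆ r) ∧
      pq.1 = C.fill σ ∧ pq.2 = C.fill τ }

/-- Term context closure E∘r. -/
def termClosure (E : Env) (r : Set ℕ) : Env :=
  E ∪ { mn | ∃ P Q, (P, Q) ∈ procClosure E r ∧ mn = (Tm.quote P, Tm.quote Q) }

/-! Structural congruence -/

inductive SC : Proc → Proc → Prop where
  | refl (P) : SC P P
  | symm {P Q} : SC P Q → SC Q P
  | trans {P Q R} : SC P Q → SC Q R → SC P R
  | inpC {P Q a X} : SC P Q → SC (.inp a X P) (.inp a X Q)
  | outC {P Q a M} : SC P Q → SC (.out a M P) (.out a M Q)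
  | parC {P P' Q Q'} : SC P P' → SC Q Q' → SC (.par P Q) (.par P' Q')
  | locC {P Q a} : SC P Q → SC (.loc a P) (.loc a Q)
  | nuC {P Q a} : SC P Q → SC (.nu a P) (.nu a Q)
  | repC {P Q} : SC P Q → SC (.rep P) (.rep Q)
  | parNil (P) : SC (.par P .nil) P
  | parComm (P Q) : SC (.par P Q) (.par Q P)
  | parAssoc (P Q R) : SC (.par (.par P Q) R) (.par P (.par Q R))
  | nuNil (a) : SC (.nu a .nil) .nil
  | nuSwap (a b P) : SC (.nu a (.nu b P)) (.nu b (.nu a P))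
  | nuPar {a} (P Q) : a ∉ Q.fn → SC (.par (.nu a P) Q) (.nu a (.par P Q))
  | repUnfold (P) : SC (.rep P) (.par P (.rep P))

/-! Environmental relations and bisimulations -/

abbrev ERel := Finset ℕ → Env → Proc → Proc → Prop

/-- Well-formedness of an environmental relation. -/
def IsEnvRel (X : ERel) : Prop :=
  ∀ r E P Q, X r E P Q → GoodEnv E ∧ P.fv = ∅ ∧ Q.fv = ∅

/-- The six clauses of environmental bisimulation, with conclusions in `Y`
    (clause 5 unchanged, in `X`). -/
def BisimClauses (X Y : ERel) : Prop :=
  ∀ r E P Q, X r E P Q →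
    (∀ P', Step P .tau P' → ∃ Q', Weak Q Q' ∧ Y r E P' Q') ∧
    (∀ a M N P', a ∈ r → (M, N) ∈ termClosure E ↑r → Step P (.inp a M) P' →
      ∃ Q', WeakStep Q (.inp a N) Q' ∧ Y r E P' Q') ∧
    (∀ bs a M P', a ∈ r → (∀ b ∈ bs, b ∉ (↑r : Set ℕ) ∪ envFnFst E) →
      Step P (.out bs a M) P' →
      ∃ cs N Q', (∀ c ∈ cs, c ∉ (↑r : Set ℕ) ∪ envFnSnd E) ∧
        WeakStep Q (.out cs a N) Q' ∧ Y r (insert (M, N) E) P' Q') ∧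
    (∀ P₁ Q₁ a, (Tm.quote P₁, Tm.quote Q₁) ∈ E → a ∈ r →
      Y r E (.par P (.loc a P₁)) (.par Q (.loc a Q₁))) ∧
    (∀ n, n ∉ envFn E → n ∉ P.fn → n ∉ Q.fn → X (insert n r) E P Q) ∧
    (∀ Q', Step Q .tau Q' → ∃ P', Weak P P' ∧ Y r E P' Q') ∧
    (∀ a M N Q', a ∈ r → (M, N) ∈ termClosure E ↑r → Step Q (.inp a N) Q' →
      ∃ P', WeakStep P (.inp a M) P' ∧ Y r E P' Q') ∧
    (∀ cs a N Q', a ∈ r → (∀ c ∈ cs, c ∉ (↑r : Set ℕ) ∪ envFnSnd E) →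
      Step Q (.out cs a N) Q' →
      ∃ bs M P', (∀ b ∈ bs, b ∉ (↑r : Set ℕ) ∪ envFnFst E) ∧
        WeakStep P (.out bs a M) P' ∧ Y r (insert (M, N) E) P' Q')

/-- Environmental bisimulation. -/
def IsEnvBisim (X : ERel) : Prop := IsEnvRel X ∧ BisimClauses X X

/-- Environmental bisimilarity ∼, the union of all environmental bisimulations. -/
def EnvBisimilar : ERel := fun r E P Q => ∃ X, IsEnvBisim X ∧ X r E P Q

/-- X⁻: up to context, environment, restriction and structural congruence. -/
def UpTo (X : ERel) : ERel := fun r E P Q =>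
  ∃ (cs ds : List ℕ) (P₀ P₁ Q₀ Q₁ : Proc) (r' : Finset ℕ) (E' : Env),
    SC P (nuList cs (.par P₀ P₁)) ∧ SC Q (nuList ds (.par Q₀ Q₁)) ∧
    X r' E' P₀ Q₀ ∧ (P₁, Q₁) ∈ procClosure E' ↑r' ∧
    E ⊆ termClosure E' ↑r' ∧ (↑r : Set ℕ) ⊆ (↑r' : Set ℕ) ∧
    (∀ c ∈ cs, c ∉ (↑r : Set ℕ) ∪ envFnFst E) ∧
    (∀ d ∈ ds, d ∉ (↑r : Set ℕ) ∪ envFnSnd E)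

/-- Environmental bisimulation up-to context. -/
def IsEnvBisimUpTo (X : ERel) : Prop := IsEnvRel X ∧ BisimClauses X (UpTo X)

/-! Simple processes, environments, relations -/

mutual
def Proc.simple : Proc → Prop
  | .nil => True
  | .inp _ X P => X ∉ P.fv ∧ P.simple
  | .out _ M P => M.simple ∧ P.simple
  | .par P Q => P.simple ∧ Q.simple
  | .loc _ P => P.simple
  | .nu _ _ => False
  | .rep P => P.simple
  | .run M => M.simple
def Tm.simple : Tm → Prop
  | .var _ => True
  | .quote P => P.simple
end

def SimpleEnv (E : Env) : Prop := ∀ p ∈ E, p.1.simple ∧ p.2.simple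

def SimpleERel (X : ERel) : Prop := ∀ r E P Q, X r E P Q → SimpleEnv E

/-! Run-erasure -/

mutual
/-- P ≤ Q : P is obtained from Q by (repeatedly) replacing subprocesses run(`R) by R. -/
inductive REp : Proc → Proc → Prop where
  | nil : REp .nil .nil
  | inp {P P' a X} : REp P P' → REp (.inp a X P) (.inp a X P')
  | out {M M' P P' a} : REt M M' → REp P P' → REp (.out a M P) (.out a M' P')
  | par {P P' Q Q'} : REp P P' → REp Q Q' → REp (.par P Q) (.par P' Q')
  | loc {P P' a} : REp P P' → REp (.loc a P) (.loc a P')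
  | nu {P P' a} : REp P P' → REp (.nu a P) (.nu a P')
  | rep {P P'} : REp P P' → REp (.rep P) (.rep P')
  | run {M M'} : REt M M' → REp (.run M) (.run M')
  | runErase {P Q} : REp P Q → REp P (.run (.quote Q))
inductive REt : Tm → Tm → Prop where
  | var {X} : REt (.var X) (.var X)
  | quote {P Q} : REp P Q → REt (.quote P) (.quote Q)
end

/-- ≤E≥ : run-erasure closure of an environment. -/
def reEnv (E : Env) : Env :=
  { mn | ∃ m' n', (m', n') ∈ E ∧ REt mn.1 m' ∧ REt mn.2 n' }

/-- X⁻≤ : composition of run-erasure with X⁻ on the run-erased environment. -/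
def UpToRE (X : ERel) : ERel := fun r E P Q =>
  ∃ P' Q', REp P P' ∧ REp Q Q' ∧ UpTo X r (reEnv E) P' Q'

/-
Both sides are, up to the shape of the parallel tree, soups of the residuals
0, e(X).0, a[0], a[e], !a[e] and !a[0]. Such a soup can only input on e or passivate
a[0] or a[e] on a, so (as a ≠ e) it has no τ-step; and as long as both !a[e] and !a[0]
are components, each of these actions is matched by one of them, leaving a soup of
the same kind. Pairs of such soups under a common context of parallel compositions and
restrictions thus form a strong bisimulation closed under parallel composition, which on
closed processes is a reduction-closed barbed equivalence.
-/

mutual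
theorem Proc.fv_subst_subset (P : Proc) (Y : ℕ) (M : Tm) :
    (P.subst Y M).fv ⊆ P.fv.erase Y ∪ M.fv := by
  match P with
  | .nil => simp [Proc.subst, Proc.fv]
  | .inp a Z P =>
    have ih := Proc.fv_subst_subset P Y M
    by_cases h : Z = Y
    · subst h; simp [Proc.subst, Proc.fv]
    · simp only [Proc.subst, h, if_false, Proc.fv]
      grind
  | .out a N P =>
    have := Proc.fv_subst_subset P Y M
    have := Tm.fv_subst_subset N Y M
    simp only [Proc.subst, Proc.fv, Finset.erase_union_distrib]
    grind
  | .par P Q =>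
    have := Proc.fv_subst_subset P Y M
    have := Proc.fv_subst_subset Q Y M
    simp only [Proc.subst, Proc.fv, Finset.erase_union_distrib]
    grind
  | .loc _ P => simpa [Proc.subst, Proc.fv] using Proc.fv_subst_subset P Y M
  | .nu _ P => simpa [Proc.subst, Proc.fv] using Proc.fv_subst_subset P Y M
  | .rep P => simpa [Proc.subst, Proc.fv] using Proc.fv_subst_subset P Y M
  | .run N => simpa [Proc.subst, Proc.fv] using Tm.fv_subst_subset N Y M

theorem Tm.fv_subst_subset (N : Tm) (Y : ℕ) (M : Tm) :
    (N.subst Y M).fv ⊆ N.fv.erase Y ∪ M.fv := by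
  match N with
  | .var Z =>
    by_cases h : Z = Y
    · simp [Tm.subst, h]
    · simp [Tm.subst, Tm.fv, h]
  | .quote P => simpa [Tm.subst, Tm.fv] using Proc.fv_subst_subset P Y M
end

def Label.receivedFv : Label → Finset ℕ
  | .inp _ M => M.fv
  | _ => ∅

def Label.sentFv : Label → Finset ℕ
  | .out _ _ M => M.fv
  | _ => ∅

theorem nuList_fv (bs : List ℕ) (P : Proc) : (nuList bs P).fv = P.fv := by
  induction bs with
  | nil => rfl
  | cons b bs ih => exact ih

theorem Step.fv_subset {P P' : Proc} {α : Label} (h : Step P α P') :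
    P'.fv ⊆ P.fv ∪ α.receivedFv ∧ α.sentFv ⊆ P.fv := by
  induction h with
  | hoIn =>
    simpa [Label.receivedFv, Label.sentFv, Proc.fv] using Proc.fv_subst_subset _ _ _
  | hoOut => simp [Label.receivedFv, Label.sentFv, Proc.fv]
  | parL _ _ ih | parR _ _ ih => simp only [Proc.fv]; grind
  | rep _ ih => simp only [Proc.fv, Finset.union_self] at ih ⊢; exact ih
  | reactL _ _ _ ih₁ ih₂ | reactR _ _ _ ih₁ ih₂ =>
    simp only [nuList_fv, Proc.fv, Label.receivedFv, Label.sentFv] at ih₁ ih₂ ⊢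
    grind
  | guard _ _ ih => exact ih
  | extr _ _ _ _ ih => simpa [Label.receivedFv, Label.sentFv, Proc.fv] using ih
  | transp _ ih => exact ih
  | passiv => simp [Label.receivedFv, Label.sentFv, Proc.fv, Tm.fv]
  | runStep => simp [Label.receivedFv, Label.sentFv, Proc.fv, Tm.fv]

theorem Step.fv_eq_empty_of_tau {P P' : Proc} (h : Step P .tau P') (hP : P.fv = ∅) :
    P'.fv = ∅ :=
  Finset.subset_empty.1 (by simpa [hP, Label.receivedFv] using h.fv_subset.1)

theorem isBarbedEquivCand_of_strongBisim {R : Proc → Proc → Prop}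
    (symm : ∀ {P Q}, R P Q → R Q P)
    (sim : ∀ {P Q α P'}, R P Q → Step P α P' → ∃ Q', Step Q α Q' ∧ R P' Q')
    (par : ∀ {P Q} (S : Proc), R P Q → R (.par P S) (.par Q S)) :
    IsBarbedEquivCand (fun P Q => R P Q ∧ P.fv = ∅ ∧ Q.fv = ∅) := by
  refine ⟨fun P Q ⟨h, hP, hQ⟩ => ⟨symm h, hQ, hP⟩, fun P Q h => h.2, ?_, ?_, ?_⟩
  · rintro P Q ⟨h, hP, hQ⟩ P' hstep
    obtain ⟨Q', hQstep, h'⟩ := sim h hstep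
    exact ⟨Q', .single hQstep, h', hstep.fv_eq_empty_of_tau hP, hQstep.fv_eq_empty_of_tau hQ⟩
  · rintro P Q ⟨h, -, -⟩ b (⟨M, P', hstep⟩ | ⟨bs, M, P', hstep⟩)
    · obtain ⟨Q', hQstep, -⟩ := sim h hstep
      exact ⟨Q, .refl, .inl ⟨M, Q', hQstep⟩⟩
    · obtain ⟨Q', hQstep, -⟩ := sim h hstep
      exact ⟨Q, .refl, .inr ⟨bs, M, Q', hQstep⟩⟩
  · rintro P Q ⟨h, hP, hQ⟩ S hS
    exact ⟨par S h, by simp [Proc.fv, hP, hS], by simp [Proc.fv, hQ, hS]⟩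

inductive ParComponent (t : Proc) : Proc → Prop
  | here : ParComponent t t
  | left {P Q : Proc} : ParComponent t P → ParComponent t (.par P Q)
  | right {P Q : Proc} : ParComponent t Q → ParComponent t (.par P Q)

theorem ParComponent.fn_subset {t P : Proc} (h : ParComponent t P) : t.fn ⊆ P.fn := by
  induction h with
  | here => rfl
  | left _ ih => exact ih.trans Finset.subset_union_left
  | right _ ih => exact ih.trans Finset.subset_union_right

theorem ParComponent.exists_step {t u P : Proc} {α : Label} (h : ParComponent t P)
    (hstep : Step t α u) (hα : α.bnames = ∅) : ∃ P', Step P α P' := by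
  induction h with
  | here => exact ⟨u, hstep⟩
  | left _ ih =>
    obtain ⟨P', h'⟩ := ih
    exact ⟨_, .parL h' (by simp [hα])⟩
  | right _ ih =>
    obtain ⟨P', h'⟩ := ih
    exact ⟨_, .parR h' (by simp [hα])⟩

namespace ExampleOne

variable (a e X : ℕ)

abbrev inpNil : Proc := .inp e X .nil

inductive Soup : Proc → Prop
  | nil : Soup .nil
  | inp : Soup (inpNil e X)
  | locNil : Soup (.loc a .nil)
  | locInp : Soup (.loc a (inpNil e X))
  | repLocInp : Soup (.rep (.loc a (inpNil e X)))
  | repLocNil : Soup (.rep (.loc a .nil))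
  | par {P Q : Proc} : Soup P → Soup Q → Soup (.par P Q)

inductive SoupLabel : Label → Prop
  | inp (M : Tm) : SoupLabel (.inp e M)
  | passivNil : SoupLabel (.out [] a (.quote .nil))
  | passivInp : SoupLabel (.out [] a (.quote (inpNil e X)))

def RichSoup (P : Proc) : Prop :=
  Soup a e X P ∧ ParComponent (.rep (.loc a (inpNil e X))) P ∧
    ParComponent (.rep (.loc a .nil)) P

-- The common context absorbs the observer and the restrictions that reactions with it create.
inductive RichRel : Proc → Proc → Prop
  | base {P Q : Proc} : RichSoup a e X P → RichSoup a e X Q → RichRel P Q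
  | par {P Q : Proc} (S : Proc) : RichRel P Q → RichRel (.par P S) (.par Q S)
  | nu {P Q : Proc} (c : ℕ) : RichRel P Q → RichRel (.nu c P) (.nu c Q)

variable {a e X}

theorem SoupLabel.no_react (hae : a ≠ e) {bs : List ℕ} {c : ℕ} {M N : Tm}
    (hout : SoupLabel a e X (.out bs c M)) (hinp : SoupLabel a e X (.inp c N)) : False := by
  cases hout <;> cases hinp <;> exact hae rfl

theorem Soup.step (hae : a ≠ e) {P P' : Proc} {α : Label} (h : Step P α P')
    (hP : Soup a e X P) : Soup a e X P' ∧ SoupLabel a e X α := by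
  induction h with
  | hoIn => cases hP; exact ⟨.nil, .inp _⟩
  | hoOut => cases hP
  | parL _ _ ih =>
    cases hP with | par h₁ h₂ => exact ⟨.par (ih h₁).1 h₂, (ih h₁).2⟩
  | parR _ _ ih =>
    cases hP with | par h₁ h₂ => exact ⟨.par h₁ (ih h₂).1, (ih h₂).2⟩
  | rep _ ih =>
    cases hP with
    | repLocInp => exact ih (.par .repLocInp .locInp)
    | repLocNil => exact ih (.par .repLocNil .locNil)
  | reactL _ _ _ ih₁ ih₂ =>
    cases hP with | par h₁ h₂ => exact ((ih₁ h₁).2.no_react hae (ih₂ h₂).2).elim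
  | reactR _ _ _ ih₁ ih₂ =>
    cases hP with | par h₁ h₂ => exact ((ih₁ h₂).2.no_react hae (ih₂ h₁).2).elim
  | guard => cases hP
  | extr => cases hP
  | transp h _ =>
    cases hP with
    | locNil => cases h
    | locInp => cases h; exact ⟨.locNil, .inp _⟩
  | passiv =>
    cases hP with
    | locNil => exact ⟨.nil, .passivNil⟩
    | locInp => exact ⟨.nil, .passivInp⟩
  | runStep => cases hP

theorem Soup.not_step_tau (hae : a ≠ e) {P P' : Proc} (h : Step P .tau P')
    (hP : Soup a e X P) : False :=
  nomatch (hP.step hae h).2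

theorem Soup.parComponent_rep_of_step (hae : a ≠ e) {P P' R : Proc} {α : Label}
    (h : Step P α P') (hP : Soup a e X P) (hR : ParComponent (.rep R) P) :
    ParComponent (.rep R) P' := by
  induction h with
  | parL _ _ ih =>
    cases hP with | par h₁ _ =>
    cases hR with
    | left hR => exact .left (ih h₁ hR)
    | right hR => exact .right hR
  | parR _ _ ih =>
    cases hP with | par _ h₂ =>
    cases hR with
    | left hR => exact .left hR
    | right hR => exact .right (ih h₂ hR)
  | rep _ ih =>
    cases hR
    cases hP with
    | repLocInp => exact ih (.par .repLocInp .locInp) (.left .here)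
    | repLocNil => exact ih (.par .repLocNil .locNil) (.left .here)
  | reactL h₁ h₂ hbs => exact (hP.not_step_tau hae (.reactL h₁ h₂ hbs)).elim
  | reactR h₁ h₂ hbs => exact (hP.not_step_tau hae (.reactR h₁ h₂ hbs)).elim
  | _ => cases hR

theorem Soup.fn_subset {P : Proc} (hP : Soup a e X P) : P.fn ⊆ {a, e} := by
  induction hP with
  | par _ _ ih₁ ih₂ => exact Finset.union_subset ih₁ ih₂
  | _ => simp [Proc.fn, Finset.subset_iff]

theorem RichSoup.fn_eq {P : Proc} (hP : RichSoup a e X P) : P.fn = {a, e} :=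
  hP.1.fn_subset.antisymm (by simpa [Proc.fn] using hP.2.1.fn_subset)

theorem RichSoup.step (hae : a ≠ e) {P P' : Proc} {α : Label} (hP : RichSoup a e X P)
    (h : Step P α P') : RichSoup a e X P' ∧ SoupLabel a e X α :=
  ⟨⟨(hP.1.step hae h).1, hP.1.parComponent_rep_of_step hae h hP.2.1,
    hP.1.parComponent_rep_of_step hae h hP.2.2⟩, (hP.1.step hae h).2⟩

theorem RichSoup.exists_step {Q : Proc} {α : Label} (hQ : RichSoup a e X Q)
    (hα : SoupLabel a e X α) : ∃ Q', Step Q α Q' := by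
  cases hα with
  | inp M => exact hQ.2.1.exists_step (.rep (.parR (.transp .hoIn) nofun)) rfl
  | passivNil => exact hQ.2.2.exists_step (.rep (.parR .passiv nofun)) rfl
  | passivInp => exact hQ.2.1.exists_step (.rep (.parR .passiv nofun)) rfl

theorem RichRel.symm {P Q : Proc} (h : RichRel a e X P Q) : RichRel a e X Q P := by
  induction h with
  | base hP hQ => exact .base hQ hP
  | par S _ ih => exact .par S ih
  | nu c _ ih => exact .nu c ih

theorem RichRel.fn_eq {P Q : Proc} (h : RichRel a e X P Q) : P.fn = Q.fn := by
  induction h with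
  | base hP hQ => rw [hP.fn_eq, hQ.fn_eq]
  | par S _ ih => simp only [Proc.fn, ih]
  | nu c _ ih => simp only [Proc.fn, ih]

theorem RichRel.nuList {P Q : Proc} (bs : List ℕ) (h : RichRel a e X P Q) :
    RichRel a e X (nuList bs P) (nuList bs Q) := by
  induction bs with
  | nil => exact h
  | cons b bs ih => exact .nu b ih

theorem RichRel.exists_step (hae : a ≠ e) {P Q P' : Proc} {α : Label}
    (h : RichRel a e X P Q) (hstep : Step P α P') :
    ∃ Q', Step Q α Q' ∧ RichRel a e X P' Q' := by
  induction h generalizing α P' with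
  | base hP hQ =>
    obtain ⟨hP', hα⟩ := hP.step hae hstep
    obtain ⟨Q', hQstep⟩ := hQ.exists_step hα
    exact ⟨Q', hQstep, .base hP' (hQ.step hae hQstep).1⟩
  | par S hPQ ih =>
    cases hstep with
    | parL hstep hbn =>
      obtain ⟨Q', hQstep, hrel⟩ := ih hstep
      exact ⟨_, .parL hQstep hbn, .par S hrel⟩
    | parR hstep hbn => exact ⟨_, .parR hstep (hPQ.fn_eq ▸ hbn), .par _ hPQ⟩
    | reactL hout hinp hbs =>
      obtain ⟨Q', hQstep, hrel⟩ := ih hout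
      exact ⟨_, .reactL hQstep hinp hbs, (hrel.par _).nuList _⟩
    | reactR hout hinp hbs =>
      obtain ⟨Q', hQstep, hrel⟩ := ih hinp
      exact ⟨_, .reactR hout hQstep (hPQ.fn_eq ▸ hbs), (hrel.par _).nuList _⟩
  | nu c _ ih =>
    cases hstep with
    | guard hstep hc =>
      obtain ⟨Q', hQstep, hrel⟩ := ih hstep
      exact ⟨_, .guard hQstep hc, .nu c hrel⟩
    | extr hstep hca hcM hcbs =>
      obtain ⟨Q', hQstep, hrel⟩ := ih hstep
      exact ⟨Q', .extr hQstep hca hcM hcbs, hrel⟩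

end ExampleOne

/-- e | !a[e] | !a[0] ≈ !a[e] | !a[0]. -/
theorem example_one (a e : ℕ) (hae : a ≠ e) (X : ℕ) :
    BarbedEquiv
      (.par (.inp e X .nil)
        (.par (.rep (.loc a (.inp e X .nil))) (.rep (.loc a .nil))))
      (.par (.rep (.loc a (.inp e X .nil))) (.rep (.loc a .nil))) := by
  open ExampleOne in
  refine ⟨_, isBarbedEquivCand_of_strongBisim (R := RichRel a e X) RichRel.symm
    (fun h => h.exists_step hae) RichRel.par, .base ?_ ?_, ?_, ?_⟩
  · exact ⟨.par .inp (.par .repLocInp .repLocNil), .right (.left .here), .right (.right .here)⟩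
  · exact ⟨.par .repLocInp .repLocNil, .left .here, .right .here⟩
  · simp [Proc.fv]
  · simp [Proc.fv]
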